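/- Let k ≥ 2, J > 2, and take all signs s_i = +1. Then the set of real numbers c such that W(c, c, …, c) = 0, where W is the cyclic-interaction vector field, has exactly three elements, all lying in the open interval (0,1): c = 1/2 and two further values 1/2 ± y* with 0 < y* < 1/2. -/

import Mathlib

/-!
On a constant vector `(c, …, c)` every component of the field is the same scalar expression, and
with `y = c - 1/2` its vanishing is the Curie–Weiss equation `2y = tanh (J y)`, i.e.
`φ y = 2 J y + log (1 - 2y) - log (1 + 2y) = 0` on `(-1/2, 1/2)`. The function `φ` is odd with
`φ' y = 2J - 4 / (1 - 4y²)`, which for `J > 2` is positive below `√((J - 2) / (4J))` and negative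
above it, while `φ → -∞` at `1/2`. Hence `φ` rises from `φ 0 = 0` and then falls through zero
exactly once in `(0, 1/2)`; oddness supplies the mirror zero.
-/

/-- The cyclic-interaction vector field `W : ℝ^k → ℝ^k`. -/
noncomputable def cycW (k : ℕ) (J : ℝ) (s : ZMod k → ℝ) (x : ZMod k → ℝ) :
    ZMod k → ℝ :=
  fun i =>
    Real.exp (s i * J * (x (i + 1) - 1 / 2)) -
      x i * (Real.exp (s i * J * (x (i + 1) - 1 / 2)) +
        Real.exp (-(s i * J * (x (i + 1) - 1 / 2))))

open Real Set

noncomputable def curieWeissDefect (J y : ℝ) : ℝ :=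
  2 * J * y + log (1 - 2 * y) - log (1 + 2 * y)

namespace curieWeissDefect

noncomputable def criticalPoint (J : ℝ) : ℝ := √((J - 2) / (4 * J))

variable {J : ℝ}

lemma criticalPoint_spec (hJ : 2 < J) :
    0 < criticalPoint J ∧ criticalPoint J < 1 / 2 ∧ 4 * J * criticalPoint J ^ 2 = J - 2 := by
  have hq : 0 < (J - 2) / (4 * J) := div_pos (by linarith) (by linarith)
  have hsq : criticalPoint J ^ 2 = (J - 2) / (4 * J) := sq_sqrt hq.le
  have hquarter : criticalPoint J ^ 2 < (1 / 2) ^ 2 := by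
    rw [hsq, div_lt_iff₀ (by linarith)]; linarith
  refine ⟨sqrt_pos.mpr hq, lt_of_pow_lt_pow_left₀ 2 (by norm_num) hquarter, ?_⟩
  rw [hsq]; field_simp

lemma apply_zero : curieWeissDefect J 0 = 0 := by simp [curieWeissDefect]

lemma apply_neg (y : ℝ) : curieWeissDefect J (-y) = -curieWeissDefect J y := by
  simp only [curieWeissDefect]
  ring_nf

lemma hasDerivAt {y : ℝ} (hy : y ∈ Ioo (-(1 / 2)) (1 / 2)) :
    HasDerivAt (curieWeissDefect J) (2 * J - 4 / (1 - 4 * y ^ 2)) y := by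
  have hm : 0 < 1 - 2 * y := by linarith [hy.2]
  have hp : 0 < 1 + 2 * y := by linarith [hy.1]
  have hsub : HasDerivAt (fun y => 1 - 2 * y) (-2) y := by
    simpa using ((hasDerivAt_id y).const_mul 2).const_sub 1
  have hadd : HasDerivAt (fun y => 1 + 2 * y) 2 y := by
    simpa using ((hasDerivAt_id y).const_mul 2).const_add 1
  have h := (((hasDerivAt_id y).const_mul (2 * J)).add (hsub.log hm.ne')).sub (hadd.log hp.ne')
  refine h.congr_deriv ?_
  rw [show 1 - 4 * y ^ 2 = (1 - 2 * y) * (1 + 2 * y) by ring]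
  field_simp
  ring

lemma continuousOn : ContinuousOn (curieWeissDefect J) (Ioo (-(1 / 2)) (1 / 2)) :=
  fun _ hy => (hasDerivAt hy).continuousAt.continuousWithinAt

lemma deriv_pos_iff {y : ℝ} (hy : y ∈ Ioo (-(1 / 2)) (1 / 2)) :
    0 < 2 * J - 4 / (1 - 4 * y ^ 2) ↔ 4 * J * y ^ 2 < J - 2 := by
  have : 0 < 1 - 4 * y ^ 2 := by nlinarith [hy.1, hy.2]
  rw [sub_pos, div_lt_iff₀ this]
  constructor <;> intro h <;> linarith

lemma deriv_neg_iff {y : ℝ} (hy : y ∈ Ioo (-(1 / 2)) (1 / 2)) :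
    2 * J - 4 / (1 - 4 * y ^ 2) < 0 ↔ J - 2 < 4 * J * y ^ 2 := by
  have : 0 < 1 - 4 * y ^ 2 := by nlinarith [hy.1, hy.2]
  rw [sub_neg, lt_div_iff₀ this]
  constructor <;> intro h <;> linarith

lemma strictMonoOn_Icc (hJ : 2 < J) :
    StrictMonoOn (curieWeissDefect J) (Icc 0 (criticalPoint J)) := by
  obtain ⟨-, hr, hsq⟩ := criticalPoint_spec hJ
  refine strictMonoOn_of_deriv_pos (convex_Icc _ _)
    (continuousOn.mono fun y hy => ⟨by linarith [hy.1], by linarith [hy.2]⟩) fun y hy => ?_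
  rw [interior_Icc] at hy
  have hy' : y ∈ Ioo (-(1 / 2)) (1 / 2) := ⟨by linarith [hy.1], by linarith [hy.2]⟩
  rw [(hasDerivAt hy').deriv, deriv_pos_iff hy', ← hsq]
  gcongr
  exacts [hy.1.le, hy.2]

lemma strictAntiOn_Ico (hJ : 2 < J) :
    StrictAntiOn (curieWeissDefect J) (Ico (criticalPoint J) (1 / 2)) := by
  obtain ⟨hr0, -, hsq⟩ := criticalPoint_spec hJ
  refine strictAntiOn_of_deriv_neg (convex_Ico _ _)
    (continuousOn.mono fun y hy => ⟨by linarith [hy.1], hy.2⟩) fun y hy => ?_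
  rw [interior_Ico] at hy
  have hy' : y ∈ Ioo (-(1 / 2)) (1 / 2) := ⟨by linarith [hy.1], hy.2⟩
  rw [(hasDerivAt hy').deriv, deriv_neg_iff hy', ← hsq]
  gcongr
  exact hy.1

lemma pos_of_mem_Ioc (hJ : 2 < J) {y : ℝ} (hy : y ∈ Ioc 0 (criticalPoint J)) :
    0 < curieWeissDefect J y := by
  have h0 : (0 : ℝ) ∈ Icc 0 (criticalPoint J) := ⟨le_rfl, hy.1.le.trans hy.2⟩
  simpa [apply_zero] using strictMonoOn_Icc hJ h0 (Ioc_subset_Icc_self hy) hy.1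

lemma exists_neg (hJ : 0 < J) : ∃ y ∈ Ioo 0 (1 / 2), curieWeissDefect J y < 0 := by
  set ε := exp (-(2 * J))
  have hε : 0 < ε := exp_pos _
  have hε1 : ε < 1 := exp_lt_one_iff.mpr (by linarith)
  -- at `y = (1 - ε) / 2` the term `log (1 - 2y) = -2J` outweighs `2Jy < J`
  refine ⟨(1 - ε) / 2, ⟨by linarith, by linarith⟩, ?_⟩
  have hlog : 0 < log (2 - ε) := log_pos (by linarith)
  rw [curieWeissDefect, show 1 - 2 * ((1 - ε) / 2) = ε by ring,
    show 1 + 2 * ((1 - ε) / 2) = 2 - ε by ring, log_exp]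
  nlinarith

lemma exists_zero_mem_Ico (hJ : 2 < J) :
    ∃ y ∈ Ico (criticalPoint J) (1 / 2), curieWeissDefect J y = 0 := by
  obtain ⟨hr0, -, -⟩ := criticalPoint_spec hJ
  obtain ⟨y₁, hy₁, hneg⟩ := exists_neg (J := J) (by linarith)
  have hpos := pos_of_mem_Ioc hJ ⟨hr0, le_rfl⟩
  have hry₁ : criticalPoint J < y₁ := by
    by_contra! h
    exact (pos_of_mem_Ioc hJ ⟨hy₁.1, h⟩).not_gt hneg
  have hcont : ContinuousOn (curieWeissDefect J) (Icc (criticalPoint J) y₁) :=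
    continuousOn.mono fun y hy => ⟨by linarith [hy.1], by linarith [hy.2, hy₁.2]⟩
  obtain ⟨y, hy, hy0⟩ := intermediate_value_Icc' hry₁.le hcont ⟨hneg.le, hpos.le⟩
  exact ⟨y, ⟨hy.1, hy.2.trans_lt hy₁.2⟩, hy0⟩

lemma eq_of_pos_of_eq_zero (hJ : 2 < J) {y z : ℝ} (hy : y ∈ Ioo 0 (1 / 2))
    (hz : z ∈ Ico (criticalPoint J) (1 / 2)) (hy0 : curieWeissDefect J y = 0)
    (hz0 : curieWeissDefect J z = 0) : y = z := by
  rcases le_or_gt y (criticalPoint J) with hyr | hry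
  · exact absurd hy0 (pos_of_mem_Ioc hJ ⟨hy.1, hyr⟩).ne'
  · exact (strictAntiOn_Ico hJ).injOn ⟨hry.le, hy.2⟩ hz (hy0.trans hz0.symm)

lemma exists_eq_zero_iff (hJ : 2 < J) :
    ∃ y₀, 0 < y₀ ∧ y₀ < 1 / 2 ∧ ∀ y ∈ Ioo (-(1 / 2)) (1 / 2),
      curieWeissDefect J y = 0 ↔ y = -y₀ ∨ y = 0 ∨ y = y₀ := by
  obtain ⟨y₀, hy₀, hy₀0⟩ := exists_zero_mem_Ico hJ
  have hpos : 0 < y₀ := (criticalPoint_spec hJ).1.trans_le hy₀.1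
  refine ⟨y₀, hpos, hy₀.2, fun y hy => ⟨fun hy0 => ?_, ?_⟩⟩
  · rcases lt_trichotomy y 0 with hneg | rfl | hy_pos
    · have := eq_of_pos_of_eq_zero hJ ⟨neg_pos.mpr hneg, by linarith [hy.1]⟩ hy₀
        (by rw [apply_neg, hy0, neg_zero]) hy₀0
      left; linarith
    · exact Or.inr (Or.inl rfl)
    · exact Or.inr (Or.inr (eq_of_pos_of_eq_zero hJ ⟨hy_pos, hy.2⟩ hy₀ hy0 hy₀0))
  · rintro (rfl | rfl | rfl)
    · rw [apply_neg, hy₀0, neg_zero]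
    · exact apply_zero
    · exact hy₀0

end curieWeissDefect

lemma exp_eq_mul_exp_add_exp_neg_iff (a c : ℝ) :
    exp a = c * (exp a + exp (-a)) ↔ 0 < c ∧ c < 1 ∧ log c - a = log (1 - c) + a := by
  have hpos := exp_pos a
  have hneg := exp_pos (-a)
  have hrearr : exp a = c * (exp a + exp (-a)) ↔ c * exp (-a) = (1 - c) * exp a := by
    constructor <;> intro h <;> linarith
  have hlog (hc0 : 0 < c) (hc1 : c < 1) :
      c * exp (-a) = (1 - c) * exp a ↔ log c - a = log (1 - c) + a := by
    rw [← exp_eq_exp (x := log c - a), exp_sub, exp_add, exp_log hc0, exp_log (sub_pos.mpr hc1),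
      exp_neg, div_eq_mul_inv]
  rw [hrearr]
  constructor
  · intro h
    have hc0 : 0 < c := by nlinarith
    have hc1 : c < 1 := by nlinarith
    exact ⟨hc0, hc1, (hlog hc0 hc1).mp h⟩
  · rintro ⟨hc0, hc1, h⟩
    exact (hlog hc0 hc1).mpr h

lemma cycW_const_eq_zero_iff (k : ℕ) (J c : ℝ) :
    cycW k J (fun _ => 1) (fun _ => c) = 0 ↔
      0 < c ∧ c < 1 ∧ curieWeissDefect J (c - 1 / 2) = 0 := by
  have hcomp : cycW k J (fun _ => 1) (fun _ => c) = 0 ↔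
      exp (J * (c - 1 / 2)) = c * (exp (J * (c - 1 / 2)) + exp (-(J * (c - 1 / 2)))) := by
    simp only [cycW, one_mul, funext_iff, Pi.zero_apply, sub_eq_zero, forall_const]
  rw [hcomp, exp_eq_mul_exp_add_exp_neg_iff]
  refine and_congr_right fun hc0 => and_congr_right fun hc1 => ?_
  rw [curieWeissDefect, show 1 - 2 * (c - 1 / 2) = 2 * (1 - c) by ring,
    show 1 + 2 * (c - 1 / 2) = 2 * c by ring, log_mul two_ne_zero (by linarith),
    log_mul two_ne_zero hc0.ne']
  constructor <;> intro h <;> linarith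

theorem statement17_general (k : ℕ) (J : ℝ) (hJ : 2 < J) :
    ∃ ys : ℝ, 0 < ys ∧ ys < 1 / 2 ∧
      {c : ℝ | cycW k J (fun _ => 1) (fun _ => c) = 0} =
        {1 / 2 - ys, 1 / 2, 1 / 2 + ys} := by
  obtain ⟨ys, hys0, hys, hzero⟩ := curieWeissDefect.exists_eq_zero_iff hJ
  refine ⟨ys, hys0, hys, Set.ext fun c => ?_⟩
  simp only [mem_ofPred_eq, mem_insert_iff, mem_singleton_iff, cycW_const_eq_zero_iff]
  constructor
  · rintro ⟨hc0, hc1, hc⟩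
    have := (hzero (c - 1 / 2) ⟨by linarith, by linarith⟩).mp hc
    grind
  · intro hc
    have hc0 : 0 < c := by grind
    have hc1 : c < 1 := by grind
    exact ⟨hc0, hc1, (hzero _ ⟨by linarith, by linarith⟩).mpr (by grind)⟩

/-- For `k ≥ 2`, `J > 2` and all signs `+1`, the constant vectors `(c,…,c)`
that are zeros of the cyclic-interaction field are exactly three, all with
`c ∈ (0,1)`: `c = 1/2` and `c = 1/2 ± y*` with `0 < y* < 1/2`. -/
theorem statement17 (k : ℕ) (hk : 2 ≤ k) (J : ℝ) (hJ : 2 < J) :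
    ∃ ys : ℝ, 0 < ys ∧ ys < 1 / 2 ∧
      {c : ℝ | cycW k J (fun _ => 1) (fun _ => c) = 0} =
        {1 / 2 - ys, 1 / 2, 1 / 2 + ys} :=
  statement17_general k J hJ
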